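/- The half-plane capacity is additive: if A ⊂ ℍ is a compact ℍ-hull and B ⊂ ℍ∖A is such that A ∪ B is a compact ℍ-hull, then g_A(B) is a compact ℍ-hull and hcap(A ∪ B) = hcap(A) + hcap(g_A(B)). -/

import Mathlib

open Filter Topology

/-- The open upper half-plane. -/
def UHP : Set ℂ := {z : ℂ | 0 < z.im}

/-- The filter of neighbourhoods of `∞` inside the upper half-plane. -/
noncomputable def atInfUHP : Filter ℂ :=
  (Filter.comap (fun z : ℂ => ‖z‖) Filter.atTop) ⊓ Filter.principal UHP

/-- `K` is a compact `ℍ`-hull: a bounded subset of `ℍ` with `K = cl(K) ∩ ℍ` whose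
complement in `ℍ` is simply connected. -/
def IsCompactHHull (K : Set ℂ) : Prop :=
  Bornology.IsBounded K ∧ K ⊆ UHP ∧ K = closure K ∩ UHP ∧
    SimplyConnectedSpace (UHP \ K : Set ℂ)

/-- `g` is the hydrodynamically normalized conformal map from `ℍ \ K` onto `ℍ`:
holomorphic and injective on `ℍ \ K`, with image `ℍ`, and `g(z) − z → 0` as `z → ∞`. -/
def IsHydroMap (K : Set ℂ) (g : ℂ → ℂ) : Prop :=
  DifferentiableOn ℂ g (UHP \ K) ∧ Set.InjOn g (UHP \ K) ∧
    g '' (UHP \ K) = UHP ∧ Filter.Tendsto (fun z => g z - z) atInfUHP (nhds 0)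

/-- `K` is a compact `ℍ`-hull with hydrodynamically normalized map `g` and half-plane
capacity `c`, i.e. `z (g(z) − z) → c` as `z → ∞`. -/
def HasHcap (K : Set ℂ) (g : ℂ → ℂ) (c : ℝ) : Prop :=
  IsHydroMap K g ∧ Filter.Tendsto (fun z => z * (g z - z)) atInfUHP (nhds (c : ℂ))

namespace Complex

noncomputable def abs : AbsoluteValue ℂ ℝ where
  toFun z := ‖z‖
  map_mul' := norm_mul
  nonneg' := norm_nonneg
  eq_zero' _ := norm_eq_zero
  add_le' := norm_add_le

lemma norm_eq_abs (z : ℂ) : ‖z‖ = abs z := rfl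

@[simp] lemma abs_ofReal (r : ℝ) : abs (r : ℂ) = |r| := Complex.norm_real r

@[simp] lemma abs_I : abs I = 1 := Complex.norm_I

lemma abs_exp (z : ℂ) : abs (exp z) = Real.exp z.re := Complex.norm_exp z

@[simp] lemma abs_exp_ofReal_mul_I (x : ℝ) : abs (exp (x * I)) = 1 :=
  Complex.norm_exp_ofReal_mul_I x

lemma abs_mul_exp_arg_mul_I (x : ℂ) : ((abs x : ℝ) : ℂ) * exp (arg x * I) = x :=
  Complex.norm_mul_exp_arg_mul_I x

lemma sq_abs (z : ℂ) : abs z ^ 2 = normSq z := Complex.sq_norm z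

lemma continuous_abs : Continuous abs := continuous_norm

lemma abs_le_abs_of_mapsTo_ball_self {f : ℂ → ℂ} {z : ℂ}
    (hd : DifferentiableOn ℂ f (Metric.ball 0 1))
    (h_maps : Set.MapsTo f (Metric.ball 0 1) (Metric.ball 0 1)) (h₀ : f 0 = 0)
    (hz : abs z < 1) : abs (f z) ≤ abs z :=
  norm_le_norm_of_mapsTo_ball hd (h_maps.mono_right Metric.ball_subset_closedBall) h₀ hz

end Complex

section Auxiliary

open Set Metric Complex ContinuousMap


lemma isOpen_UHP : IsOpen UHP := isOpen_lt continuous_const Complex.continuous_im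

lemma eventually_atInfUHP {p : ℂ → Prop} :
    (∀ᶠ z in atInfUHP, p z) ↔ ∃ R : ℝ, ∀ z ∈ UHP, R ≤ Complex.abs z → p z := by
  rw [atInfUHP, eventually_inf_principal]
  constructor
  · intro h
    rw [Filter.eventually_comap] at h
    obtain ⟨R, hR⟩ := Filter.eventually_atTop.mp h
    exact ⟨R, fun z hz hRz => hR (Complex.abs z) hRz z rfl hz⟩
  · rintro ⟨R, hR⟩
    rw [Filter.eventually_comap]
    filter_upwards [Filter.eventually_ge_atTop R] with r hr z hz hzU
    exact hR z hzU (by rw [← Complex.norm_eq_abs, hz]; exact hr)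

lemma tendsto_abs_atInfUHP : Tendsto Complex.abs atInfUHP atTop :=
  tendsto_inf_left tendsto_comap

lemma eventually_mem_UHP : ∀ᶠ z in atInfUHP, z ∈ UHP :=
  eventually_atInfUHP.mpr ⟨0, fun z hz _ => hz⟩

lemma tendsto_atInfUHP_of {α : Type*} {l : Filter α} {f : α → ℂ}
    (h1 : Tendsto (fun z => Complex.abs (f z)) l atTop)
    (h2 : ∀ᶠ z in l, f z ∈ UHP) : Tendsto f l atInfUHP := by
  rw [atInfUHP, tendsto_inf]
  exact ⟨tendsto_comap_iff.mpr h1, tendsto_principal.mpr h2⟩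

lemma tendsto_inv_atInfUHP : Tendsto (fun z : ℂ => z⁻¹) atInfUHP (𝓝 0) := by
  rw [tendsto_zero_iff_norm_tendsto_zero]
  have : (fun z : ℂ => ‖z⁻¹‖) = fun z => (Complex.abs z)⁻¹ := by
    funext z; simp [Complex.norm_eq_abs, map_inv₀]
  rw [this]
  exact tendsto_inv_atTop_zero.comp tendsto_abs_atInfUHP

lemma tendsto_mul_I_atInfUHP : Tendsto (fun y : ℝ => (y : ℂ) * Complex.I) atTop atInfUHP := by
  apply tendsto_atInfUHP_of
  · have : (fun y : ℝ => Complex.abs ((y:ℂ) * Complex.I)) = fun y : ℝ => |y| := by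
      funext y; simp [map_mul]
    exact this ▸ tendsto_abs_atTop_atTop
  · filter_upwards [Filter.eventually_gt_atTop (0:ℝ)] with y hy
    simpa [UHP] using hy



theorem injOn_deriv_ne_zero {f : ℂ → ℂ} {U : Set ℂ} (hU : IsOpen U)
    (hd : DifferentiableOn ℂ f U) (hi : Set.InjOn f U) {z₀ : ℂ} (hz : z₀ ∈ U) :
    deriv f z₀ ≠ 0 := by
  intro hder
  have hmem : U ∈ 𝓝 z₀ := hU.mem_nhds hz
  have han : AnalyticAt ℂ f z₀ := hd.analyticAt hmem
  have hanF : AnalyticAt ℂ (fun z => f z - f z₀) z₀ := han.sub analyticAt_const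
  have horder_ne_top : analyticOrderAt (fun z => f z - f z₀) z₀ ≠ ⊤ := by
    intro h
    rw [analyticOrderAt_eq_top] at h
    have h2 : ∀ᶠ z in 𝓝[≠] z₀, (f z - f z₀ = 0 ∧ z ∈ U) ∧ z ∈ ({z₀}ᶜ : Set ℂ) :=
      ((h.and (hU.eventually_mem hz)).filter_mono nhdsWithin_le_nhds).and
        eventually_mem_nhdsWithin
    obtain ⟨z₁, ⟨hz₁, hz₁U⟩, hne⟩ := h2.exists
    exact hne (hi hz₁U hz (sub_eq_zero.mp hz₁))
  obtain ⟨n, hn⟩ := WithTop.ne_top_iff_exists.mp horder_ne_top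
  obtain ⟨q, hq_an, hq0, hqf⟩ := (hanF.analyticOrderAt_eq_natCast (n := n)).mp hn.symm
  simp only [smul_eq_mul] at hqf
  have hn0 : n ≠ 0 := by
    rintro rfl
    have h0 := hqf.self_of_nhds
    simp only [sub_self, pow_zero, one_mul] at h0
    exact hq0 h0.symm
  have hn1 : n ≠ 1 := by
    rintro rfl
    have hq_diff : DifferentiableAt ℂ q z₀ := hq_an.differentiableAt
    have h1 : HasDerivAt (fun z => (z - z₀) ^ 1 * q z)
        ((1 : ℂ) * q z₀ + (z₀ - z₀) * deriv q z₀) z₀ := by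
      simpa using (((hasDerivAt_id z₀).sub_const z₀).fun_mul hq_diff.hasDerivAt)
    have h2 : HasDerivAt (fun z => f z - f z₀) ((1:ℂ) * q z₀ + (z₀ - z₀) * deriv q z₀) z₀ :=
      h1.congr_of_eventuallyEq hqf
    have h3 : deriv (fun z => f z - f z₀) z₀ = q z₀ := by
      rw [h2.deriv]; ring
    rw [deriv_sub_const, hder] at h3
    exact hq0 h3.symm
  have hn2 : 2 ≤ n := by omega
  have hnc0 : (n : ℂ) ≠ 0 := Nat.cast_ne_zero.mpr hn0
  set c₀ := q z₀ with hc₀def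
  have hc₀ : c₀ ≠ 0 := hq0
  set C := Complex.exp (Complex.log c₀ / n) with hCdef
  have hC0 : C ≠ 0 := Complex.exp_ne_zero _
  have hCn : C ^ n = c₀ := by
    rw [hCdef, ← Complex.exp_nat_mul, mul_div_cancel₀ _ hnc0, Complex.exp_log hc₀]
  set r : ℂ → ℂ := fun z => Complex.exp (Complex.log (q z / c₀) / n) * C with hr_def
  have hq_cont : ContinuousAt q z₀ := hq_an.continuousAt
  have hslit : ∀ᶠ z in 𝓝 z₀, q z / c₀ ∈ Complex.slitPlane := by
    have hc : ContinuousAt (fun z => q z / c₀) z₀ := hq_cont.div_const _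
    have h1 : Complex.slitPlane ∈ 𝓝 (q z₀ / c₀) := by
      rw [div_self hc₀]
      exact Complex.isOpen_slitPlane.mem_nhds Complex.one_mem_slitPlane
    exact hc.eventually_mem h1
  have hqne : ∀ᶠ z in 𝓝 z₀, q z ≠ 0 := hq_cont.eventually_ne hq0
  have hrn : ∀ᶠ z in 𝓝 z₀, r z ^ n = q z := by
    filter_upwards [hslit, hqne] with z h1 h2
    have hqz : q z / c₀ ≠ 0 := div_ne_zero h2 hc₀
    rw [hr_def]
    simp only
    rw [mul_pow, ← Complex.exp_nat_mul, mul_div_cancel₀ _ hnc0, Complex.exp_log hqz, hCn,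
      div_mul_cancel₀ _ hc₀]
  have hev : ∀ᶠ z in 𝓝 z₀, (AnalyticAt ℂ q z ∧ q z / c₀ ∈ Complex.slitPlane) ∧
      (r z ^ n = q z ∧ f z - f z₀ = (z - z₀) ^ n * q z ∧ z ∈ U) :=
    by
    filter_upwards [hq_an.eventually_analyticAt, hslit, hrn, hqf, hU.eventually_mem hz] with z
      h1 h2 h3 h4 h5
    exact ⟨⟨h1, h2⟩, h3, h4, h5⟩
  obtain ⟨t, htP, hto, htz⟩ := _root_.eventually_nhds_iff.mp hev
  have hr_diff : DifferentiableOn ℂ r t := by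
    intro z hzt
    obtain ⟨⟨hqa, hsl⟩, -⟩ := htP z hzt
    exact ((((hqa.differentiableAt.div_const _).clog hsl).div_const _).cexp.mul_const
      C).differentiableWithinAt
  set v : ℂ → ℂ := fun z => (z - z₀) * r z with hv_def
  have hv_diff : DifferentiableOn ℂ v t :=
    (differentiable_id.sub_const _).differentiableOn.mul hr_diff
  have hv_an : AnalyticAt ℂ v z₀ := hv_diff.analyticAt (hto.mem_nhds htz)
  have hrz₀ : r z₀ = C := by
    rw [hr_def]
    simp only
    rw [div_self hc₀, Complex.log_one, zero_div, Complex.exp_zero, one_mul]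
  have hvd : HasDerivAt v (r z₀) z₀ := by
    have h1 := ((hasDerivAt_id z₀).sub_const z₀).fun_mul
      ((hr_diff.differentiableAt (hto.mem_nhds htz)).hasDerivAt)
    simpa using h1
  have hvs : HasStrictDerivAt v (r z₀) z₀ := by
    have h2 := hv_an.hasStrictFDerivAt.hasStrictDerivAt
    rwa [fderiv_apply_one_eq_deriv, hvd.deriv] at h2
  have hr0 : r z₀ ≠ 0 := by rw [hrz₀]; exact hC0
  have hmap := hvs.map_nhds_eq hr0
  have hvz₀ : v z₀ = 0 := by simp [hv_def]
  have hmem2 : v '' t ∈ 𝓝 (0 : ℂ) := by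
    rw [← hvz₀, ← hmap]
    exact image_mem_map (hto.mem_nhds htz)
  obtain ⟨δ, hδ0, hδ⟩ := Metric.mem_nhds_iff.mp hmem2
  set ζ : ℂ := Complex.exp (2 * Real.pi * Complex.I / n) with hζdef
  have hζprim : IsPrimitiveRoot ζ n := Complex.isPrimitiveRoot_exp n hn0
  have hζn : ζ ^ n = 1 := hζprim.pow_eq_one
  have hζ1 : ζ ≠ 1 := by
    intro h
    have hdvd : n ∣ 1 := hζprim.dvd_of_pow_eq_one 1 (by rw [pow_one, h])
    have := Nat.le_of_dvd one_pos hdvd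
    omega
  set p : ℂ := ((δ / 2 : ℝ) : ℂ) with hpdef
  have hp0 : p ≠ 0 := by
    simp only [hpdef, Ne, Complex.ofReal_eq_zero]
    linarith
  have habsp : Complex.abs p = δ / 2 := by
    rw [hpdef, Complex.abs_ofReal, abs_of_pos (by linarith)]
  have hpmem : p ∈ ball (0 : ℂ) δ := by
    rw [mem_ball_zero_iff, Complex.norm_eq_abs, habsp]; linarith
  have hζpmem : ζ * p ∈ ball (0 : ℂ) δ := by
    have habsζ : Complex.abs ζ = 1 := by
      rw [hζdef, Complex.abs_exp]
      have hre : (2 * (Real.pi : ℂ) * I / (n : ℂ)).re = 0 := by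
        simp [Complex.div_re]
      rw [hre, Real.exp_zero]
    rw [mem_ball_zero_iff, Complex.norm_eq_abs, map_mul, habsζ, one_mul, habsp]
    linarith
  obtain ⟨z₁, hz₁t, hvz₁⟩ := hδ hζpmem
  obtain ⟨z₂, hz₂t, hvz₂⟩ := hδ hpmem
  have hfz₁ : f z₁ - f z₀ = p ^ n := by
    obtain ⟨-, hrn₁, hf₁, -⟩ := htP z₁ hz₁t
    rw [hf₁, ← hrn₁, ← mul_pow]
    rw [show (z₁ - z₀) * r z₁ = v z₁ from rfl, hvz₁, mul_pow, hζn, one_mul]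
  have hfz₂ : f z₂ - f z₀ = p ^ n := by
    obtain ⟨-, hrn₂, hf₂, -⟩ := htP z₂ hz₂t
    rw [hf₂, ← hrn₂, ← mul_pow]
    rw [show (z₂ - z₀) * r z₂ = v z₂ from rfl, hvz₂]
  have hz₁U : z₁ ∈ U := (htP z₁ hz₁t).2.2.2
  have hz₂U : z₂ ∈ U := (htP z₂ hz₂t).2.2.2
  have heq : z₁ = z₂ := hi hz₁U hz₂U (sub_left_inj.mp (hfz₁.trans hfz₂.symm))
  have : ζ * p = p := by rw [← hvz₁, ← hvz₂, heq]
  exact hζ1 (mul_right_cancel₀ hp0 (by rw [this, one_mul]))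

theorem exists_global_inverse {f : ℂ → ℂ} {U : Set ℂ} (hU : IsOpen U)
    (hd : DifferentiableOn ℂ f U) (hi : Set.InjOn f U) :
    ∃ G : ℂ → ℂ, (∀ w ∈ f '' U, G w ∈ U ∧ f (G w) = w) ∧ (∀ z ∈ U, G (f z) = z) ∧
      DifferentiableOn ℂ G (f '' U) ∧ ∀ O ⊆ U, IsOpen O → IsOpen (f '' O) := by
  have hsd : ∀ z ∈ U, HasStrictDerivAt f (deriv f z) z := fun z hz => by
    have h := (hd.analyticAt (hU.mem_nhds hz)).hasStrictFDerivAt.hasStrictDerivAt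
    rwa [fderiv_apply_one_eq_deriv] at h
  have hd0 : ∀ z ∈ U, deriv f z ≠ 0 := fun z hz => injOn_deriv_ne_zero hU hd hi hz
  have hopen : ∀ O ⊆ U, IsOpen O → IsOpen (f '' O) := by
    intro O hOU hO
    rw [isOpen_iff_mem_nhds]
    rintro w ⟨z, hzO, rfl⟩
    rw [← (hsd z (hOU hzO)).map_nhds_eq (hd0 z (hOU hzO))]
    exact image_mem_map (hO.mem_nhds hzO)
  refine ⟨Function.invFunOn f U, ?_, fun z hz => hi.leftInvOn_invFunOn hz, ?_, hopen⟩
  · rintro w ⟨z, hzU, rfl⟩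
    exact ⟨Function.invFunOn_mem ⟨z, hzU, rfl⟩, Function.invFunOn_eq ⟨z, hzU, rfl⟩⟩
  · rintro w ⟨z₀, hz₀U, rfl⟩
    have hstrict := (hsd z₀ hz₀U).hasStrictFDerivAt_equiv (hd0 z₀ hz₀U)
    have hgev : ∀ᶠ x in 𝓝 z₀, Function.invFunOn f U (f x) = x := by
      filter_upwards [hU.eventually_mem hz₀U] with x hx using hi.leftInvOn_invFunOn hx
    have huniq := hstrict.localInverse_unique hgev
    have hdiff : DifferentiableAt ℂ (hstrict.localInverse f _ z₀) (f z₀) :=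
      hstrict.to_localInverse.differentiableAt
    exact (hdiff.congr_of_eventuallyEq huniq).differentiableWithinAt

lemma isPreconnected_outer {r : ℝ} (hr : 0 ≤ r) :
    IsPreconnected {w : ℂ | 0 < w.im ∧ r < Complex.abs w} := by
  have h1 : IsPreconnected ((Ioi r) ×ˢ (Ioo (0 : ℝ) Real.pi)) :=
    isPreconnected_Ioi.prod isPreconnected_Ioo
  have h2 : Continuous (fun p : ℝ × ℝ => (p.1 : ℂ) * Complex.exp ((p.2 : ℂ) * Complex.I)) := by
    continuity
  have h3 := h1.image _ h2.continuousOn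
  have himg : (fun p : ℝ × ℝ => (p.1 : ℂ) * Complex.exp ((p.2 : ℂ) * Complex.I)) ''
      ((Ioi r) ×ˢ (Ioo (0 : ℝ) Real.pi)) = {w : ℂ | 0 < w.im ∧ r < Complex.abs w} := by
    ext w
    constructor
    · rintro ⟨⟨ρ, θ⟩, ⟨hρ, hθ1, hθ2⟩, rfl⟩
      have hρ0 : 0 < ρ := lt_of_le_of_lt hr hρ
      constructor
      · show 0 < ((ρ : ℂ) * Complex.exp ((θ : ℂ) * Complex.I)).im
        have him : ((ρ : ℂ) * Complex.exp ((θ : ℂ) * Complex.I)).im = ρ * Real.sin θ := by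
          rw [Complex.mul_im, Complex.exp_ofReal_mul_I_im]
          simp
        rw [him]
        exact mul_pos hρ0 (Real.sin_pos_of_pos_of_lt_pi hθ1 hθ2)
      · show r < Complex.abs _
        rw [map_mul, Complex.abs_ofReal, Complex.abs_exp_ofReal_mul_I, mul_one,
          abs_of_pos hρ0]
        exact hρ
    · rintro ⟨him, habs⟩
      have hw0 : w ≠ 0 := by
        intro h; rw [h] at habs; simp at habs; linarith
      refine ⟨⟨Complex.abs w, Complex.arg w⟩, ⟨habs, ?_, ?_⟩, ?_⟩
      · by_contra hle
        push_neg at hle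
        have h3 : Real.sin (Complex.arg w) ≤ 0 :=
          Real.sin_nonpos_of_nonpos_of_neg_pi_le hle (le_of_lt (Complex.neg_pi_lt_arg w))
        have h4 : 0 < Real.sin (Complex.arg w) := by
          rw [Complex.sin_arg]
          exact div_pos him (AbsoluteValue.pos Complex.abs hw0)
        linarith
      · rcases lt_or_eq_of_le (Complex.arg_le_pi w) with h | h
        · exact h
        · exfalso
          have h4 : 0 < Real.sin (Complex.arg w) := by
            rw [Complex.sin_arg]
            exact div_pos him (AbsoluteValue.pos Complex.abs hw0)
          rw [h, Real.sin_pi] at h4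
          exact lt_irrefl 0 h4
      · simpa using Complex.abs_mul_exp_arg_mul_I w
  rwa [himg] at h3

theorem hydro_inv_bound {K : Set ℂ} {g G : ℂ → ℂ}
    (hb : Bornology.IsBounded K)
    (hinj : Set.InjOn g (UHP \ K))
    (himg : g '' (UHP \ K) = UHP)
    (htend : Filter.Tendsto (fun z => g z - z) atInfUHP (nhds 0))
    (hGmem : ∀ w ∈ UHP, G w ∈ UHP \ K ∧ g (G w) = w)
    (hGc : ContinuousOn G UHP)
    {ε : ℝ} (hε : 0 < ε) :
    ∃ R : ℝ, 0 < R ∧ ∀ w ∈ UHP, R ≤ Complex.abs w → Complex.abs (G w - w) ≤ ε := by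
  obtain ⟨R₀, hR₀⟩ := hb.subset_ball 0
  have hev : ∀ᶠ z in atInfUHP, Complex.abs (g z - z) ≤ ε := by
    have h1 : ∀ᶠ u in 𝓝 (0 : ℂ), Complex.abs u ≤ ε := by
      filter_upwards [Metric.closedBall_mem_nhds (0 : ℂ) hε] with u hu
      simpa [Complex.dist_eq, Complex.norm_eq_abs] using hu
    exact htend.eventually h1
  obtain ⟨R₁', hR₁'⟩ := eventually_atInfUHP.mp hev
  set R₁ : ℝ := max R₁' (max (R₀ + 1) 1) with hR₁def
  have hR₁pos : 0 < R₁ := lt_of_lt_of_le one_pos (le_trans (le_max_right _ _) (le_max_right _ _))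
  have hR₀R₁ : R₀ ≤ R₁ := le_trans (by linarith) (le_trans (le_max_left _ _) (le_max_right _ _))
  have hgood : ∀ z ∈ UHP, R₁ ≤ Complex.abs z → z ∈ UHP \ K ∧ Complex.abs (g z - z) ≤ ε := by
    intro z hz hle
    refine ⟨⟨hz, fun hzK => ?_⟩, hR₁' z hz (le_trans (le_max_left _ _) hle)⟩
    have h2 := hR₀ hzK
    rw [mem_ball, dist_zero_right, Complex.norm_eq_abs] at h2
    linarith
  have himgmem : ∀ z ∈ UHP \ K, g z ∈ UHP := fun z hz => himg ▸ mem_image_of_mem g hz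
  -- base point
  set y₀ : ℝ := R₁ + 4 * ε with hy₀def
  set z₀ : ℂ := (y₀ : ℂ) * Complex.I with hz₀def
  have hz₀U : z₀ ∈ UHP := by
    show 0 < z₀.im
    rw [hz₀def]
    simp only [Complex.mul_im, Complex.ofReal_re, Complex.I_im, Complex.ofReal_im,
      Complex.I_re, mul_one, mul_zero, add_zero]
    linarith
  have hz₀abs : Complex.abs z₀ = y₀ := by
    rw [hz₀def, map_mul, Complex.abs_ofReal, Complex.abs_I, mul_one, abs_of_pos (by linarith)]
  have hz₀good := hgood z₀ hz₀U (by rw [hz₀abs]; linarith)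
  set w₀ : ℂ := g z₀ with hw₀def
  have hw₀U : w₀ ∈ UHP := himgmem z₀ hz₀good.1
  have hw₀abs : R₁ + 3 * ε ≤ Complex.abs w₀ := by
    have h3 : Complex.abs z₀ - Complex.abs w₀ ≤ Complex.abs (z₀ - w₀) := by
      simpa [Complex.norm_eq_abs] using norm_sub_norm_le z₀ w₀
    rw [AbsoluteValue.map_sub, hz₀abs] at h3
    have h5 := hz₀good.2
    linarith
  have hGw₀ : G w₀ = z₀ := hinj (hGmem w₀ hw₀U).1 hz₀good.1 (by rw [(hGmem w₀ hw₀U).2])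
  -- preconnected outer region
  set W : Set ℂ := {w : ℂ | 0 < w.im ∧ R₁ + 2 * ε < Complex.abs w} with hWdef
  have hWpre : IsPreconnected W := isPreconnected_outer (by positivity)
  set o₁ : Set ℂ := UHP ∩ G ⁻¹' {z : ℂ | R₁ < Complex.abs z} with ho₁def
  set o₂ : Set ℂ := UHP ∩ G ⁻¹' {z : ℂ | Complex.abs z < R₁ + ε} with ho₂def
  have ho₁ : IsOpen o₁ :=
    hGc.isOpen_inter_preimage isOpen_UHP (isOpen_lt continuous_const Complex.continuous_abs)
  have ho₂ : IsOpen o₂ :=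
    hGc.isOpen_inter_preimage isOpen_UHP (isOpen_lt Complex.continuous_abs continuous_const)
  have hWUHP : W ⊆ UHP := fun w hw => hw.1
  have hkey : ∀ w ∈ W, R₁ < Complex.abs (G w) → R₁ + ε < Complex.abs (G w) := by
    intro w hw h1
    have hGU := hGmem w (hWUHP hw)
    have h2 := hgood (G w) hGU.1.1 (le_of_lt h1)
    have h3 : Complex.abs (g (G w) - G w) ≤ ε := h2.2
    rw [hGU.2] at h3
    have h4 : Complex.abs w - Complex.abs (G w) ≤ Complex.abs (w - G w) := by
      simpa [Complex.norm_eq_abs] using norm_sub_norm_le w (G w)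
    have h6 := hw.2
    linarith
  have hWsub : W ⊆ o₁ ∪ o₂ := by
    intro w hw
    rcases lt_or_ge R₁ (Complex.abs (G w)) with h | h
    · exact Or.inl ⟨hWUHP hw, h⟩
    · exact Or.inr ⟨hWUHP hw, by simpa using lt_of_le_of_lt h (by linarith)⟩
  have hw₀W : w₀ ∈ W ∩ o₁ := by
    refine ⟨⟨hw₀U, by linarith⟩, hw₀U, ?_⟩
    show R₁ < Complex.abs (G w₀)
    rw [hGw₀, hz₀abs]
    linarith
  have hmain : ∀ w ∈ W, R₁ < Complex.abs (G w) := by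
    by_contra hcon
    push_neg at hcon
    obtain ⟨w', hw'W, hw'le⟩ := hcon
    have hw'o₂ : w' ∈ W ∩ o₂ := ⟨hw'W, hWUHP hw'W, by simpa using lt_of_le_of_lt hw'le (by linarith)⟩
    obtain ⟨x, hxW, hxo₁, hxo₂⟩ := hWpre o₁ o₂ ho₁ ho₂ hWsub ⟨w₀, hw₀W⟩ ⟨w', hw'o₂⟩
    have h7 := hkey x hxW hxo₁.2
    have h8 : Complex.abs (G x) < R₁ + ε := hxo₂.2
    linarith
  refine ⟨R₁ + 2 * ε + 1, by linarith, ?_⟩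
  intro w hwU hwabs
  have hwW : w ∈ W := ⟨hwU, by linarith⟩
  have h1 := hmain w hwW
  have hGU := hGmem w hwU
  have h2 := hgood (G w) hGU.1.1 (le_of_lt h1)
  have h3 : Complex.abs (g (G w) - G w) ≤ ε := h2.2
  rw [hGU.2] at h3
  rwa [AbsoluteValue.map_sub] at h3

lemma normSq_sub_conj (v b : ℂ) :
    Complex.normSq (v - (starRingEnd ℂ) b) = Complex.normSq (v - b) + 4 * v.im * b.im := by
  simp only [Complex.normSq_apply, Complex.sub_re, Complex.sub_im, Complex.conj_re,
    Complex.conj_im]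
  ring

lemma sub_conj_ne_zero {v b : ℂ} (hv : 0 < v.im) (hb : 0 < b.im) :
    v - (starRingEnd ℂ) b ≠ 0 := by
  intro h
  have : (v - (starRingEnd ℂ) b).im = 0 := by rw [h]; simp
  rw [Complex.sub_im, Complex.conj_im] at this
  linarith

theorem schwarz_halfplane {φ : ℂ → ℂ} (hd : DifferentiableOn ℂ φ UHP)
    (hm : Set.MapsTo φ UHP UHP) {y y' : ℝ} (hy : 0 < y) (hyy' : y < y') :
    y * y' * Complex.normSq (φ ((y : ℂ) * Complex.I) - (starRingEnd ℂ) (φ ((y' : ℂ) * Complex.I)))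
      ≤ (y + y') ^ 2 * (φ ((y : ℂ) * Complex.I)).im * (φ ((y' : ℂ) * Complex.I)).im := by
  have hy'0 : 0 < y' := hy.trans hyy'
  have him_mulI : ∀ t : ℝ, ((t : ℂ) * Complex.I).im = t := by intro t; simp
  have hiyU : (y : ℂ) * Complex.I ∈ UHP := by
    show 0 < ((y : ℂ) * Complex.I).im
    rw [him_mulI]; exact hy
  have hiy'U : (y' : ℂ) * Complex.I ∈ UHP := by
    show 0 < ((y' : ℂ) * Complex.I).im
    rw [him_mulI]; exact hy'0
  set w := φ ((y : ℂ) * Complex.I) with hwdef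
  set b := φ ((y' : ℂ) * Complex.I) with hbdef
  have hwim : 0 < w.im := hm hiyU
  have hbim : 0 < b.im := hm hiy'U
  -- the Cayley-type map into UHP
  set κ : ℂ → ℂ := fun u => ((y' : ℂ) * Complex.I) * ((1 + u) / (1 - u)) with hκdef
  have hone : ∀ u ∈ ball (0 : ℂ) 1, (1 : ℂ) - u ≠ 0 := by
    intro u hu h
    rw [mem_ball_zero_iff] at hu
    have : u = 1 := by linear_combination -h
    rw [this] at hu
    simp at hu
  have hκmem : ∀ u ∈ ball (0 : ℂ) 1, κ u ∈ UHP := by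
    intro u hu
    have h1u := hone u hu
    have hnormSqlt : Complex.normSq u < 1 := by
      rw [mem_ball_zero_iff, Complex.norm_eq_abs] at hu
      rw [← Complex.sq_abs]
      nlinarith [Complex.abs.nonneg u]
    have hre : ((1 + u) / (1 - u)).re = (1 - Complex.normSq u) / Complex.normSq (1 - u) := by
      rw [Complex.div_re]
      simp only [Complex.add_re, Complex.one_re, Complex.sub_re, Complex.add_im,
        Complex.one_im, Complex.sub_im, Complex.normSq_apply]
      ring_nf
    show 0 < (κ u).im
    have him : (κ u).im = y' * ((1 + u) / (1 - u)).re := by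
      rw [hκdef]
      simp only [Complex.mul_im, Complex.mul_re, Complex.I_re, Complex.I_im,
        Complex.ofReal_re, Complex.ofReal_im]
      ring
    rw [him, hre]
    have hnsq : 0 < Complex.normSq (1 - u) := Complex.normSq_pos.mpr h1u
    have : 0 < 1 - Complex.normSq u := by linarith
    positivity
  have hκdiff : DifferentiableOn ℂ κ (ball 0 1) := by
    intro u hu
    exact ((differentiableAt_const _).mul
      (((differentiableAt_const _).add differentiableAt_id).div
        ((differentiableAt_const _).sub differentiableAt_id) (hone u hu))).differentiableWithinAt
  have hκ0 : κ 0 = (y' : ℂ) * Complex.I := by simp [hκdef]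
  -- the target Möbius map
  set μ : ℂ → ℂ := fun v => (v - b) / (v - (starRingEnd ℂ) b) with hμdef
  have hμmaps : ∀ v, 0 < v.im → μ v ∈ ball (0 : ℂ) 1 := by
    intro v hv
    have hden := sub_conj_ne_zero hv hbim
    have hdenpos : 0 < Complex.abs (v - (starRingEnd ℂ) b) := AbsoluteValue.pos _ hden
    rw [mem_ball_zero_iff, Complex.norm_eq_abs, hμdef]
    simp only [map_div₀]
    rw [div_lt_one hdenpos]
    have hlt : Complex.normSq (v - b) < Complex.normSq (v - (starRingEnd ℂ) b) := by
      rw [normSq_sub_conj]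
      nlinarith
    have h1 := Complex.sq_abs (v - b)
    have h2 := Complex.sq_abs (v - (starRingEnd ℂ) b)
    nlinarith [Complex.abs.nonneg (v - b), Complex.abs.nonneg (v - (starRingEnd ℂ) b)]
  -- the composite
  set G : ℂ → ℂ := fun u => μ (φ (κ u)) with hGdef
  have hGdiff : DifferentiableOn ℂ G (ball 0 1) := by
    intro u hu
    have hκu : κ u ∈ UHP := hκmem u hu
    have hκd : DifferentiableAt ℂ κ u := (hκdiff u hu).differentiableAt (isOpen_ball.mem_nhds hu)
    have hφd : DifferentiableAt ℂ φ (κ u) := hd.differentiableAt (isOpen_UHP.mem_nhds hκu)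
    have hden := sub_conj_ne_zero (hm hκu) hbim
    exact ((((hφd.comp u hκd).sub (differentiableAt_const _)).div
      ((hφd.comp u hκd).sub (differentiableAt_const _)) hden)).differentiableWithinAt
  have hGmaps : Set.MapsTo G (ball 0 1) (ball 0 1) := fun u hu => hμmaps _ (hm (hκmem u hu))
  have hG0 : G 0 = 0 := by
    rw [hGdef]
    simp only
    rw [hκ0, ← hbdef, hμdef]
    simp
  set u₀ : ℂ := (((y - y') / (y + y') : ℝ) : ℂ) with hu₀def
  have hu₀abs : Complex.abs u₀ < 1 := by
    rw [hu₀def, Complex.abs_ofReal, abs_div, abs_of_neg (by linarith), abs_of_pos (by linarith),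
      div_lt_one (by linarith)]
    linarith
  have hu₀mem : u₀ ∈ ball (0 : ℂ) 1 := by rwa [mem_ball_zero_iff, Complex.norm_eq_abs]
  have hSch := Complex.abs_le_abs_of_mapsTo_ball_self hGdiff hGmaps hG0 hu₀abs
  have hκu₀ : κ u₀ = (y : ℂ) * Complex.I := by
    have hys : ((y : ℂ) + (y' : ℂ)) ≠ 0 := by
      rw [← Complex.ofReal_add, Ne, Complex.ofReal_eq_zero]
      linarith
    have hy'ne : ((y' : ℂ)) ≠ 0 := by
      rw [Ne, Complex.ofReal_eq_zero]; linarith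
    have h1u₀ : (1 : ℂ) - u₀ ≠ 0 := hone u₀ hu₀mem
    rw [hκdef]
    simp only
    rw [mul_div_assoc', div_eq_iff h1u₀, hu₀def]
    push_cast
    field_simp
    ring
  rw [hGdef] at hSch
  simp only at hSch
  rw [hκu₀, ← hwdef] at hSch
  -- now hSch : abs (μ w) ≤ abs u₀
  have hden := sub_conj_ne_zero hwim hbim
  have hdenpos : 0 < Complex.abs (w - (starRingEnd ℂ) b) := AbsoluteValue.pos _ hden
  rw [hμdef] at hSch
  simp only [map_div₀] at hSch
  rw [div_le_iff₀ hdenpos] at hSch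
  have habs_u₀ : Complex.abs u₀ = (y' - y) / (y + y') := by
    rw [hu₀def, Complex.abs_ofReal, abs_div, abs_of_neg (by linarith), abs_of_pos (by linarith)]
    ring
  rw [habs_u₀, div_mul_eq_mul_div, le_div_iff₀ (by linarith : (0:ℝ) < y + y')] at hSch
  -- square it
  have hsq : Complex.normSq (w - b) * (y + y') ^ 2 ≤ (y' - y) ^ 2 *
      Complex.normSq (w - (starRingEnd ℂ) b) := by
    have h1 := Complex.sq_abs (w - b)
    have h2 := Complex.sq_abs (w - (starRingEnd ℂ) b)
    have h3 := mul_self_le_mul_self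
      (mul_nonneg (Complex.abs.nonneg (w - b)) (by linarith : (0:ℝ) ≤ y + y')) hSch
    nlinarith [h3, h1, h2]
  have hid := normSq_sub_conj w b
  nlinarith [Complex.normSq_nonneg (w - b), mul_pos hwim hbim, mul_pos hy hy'0]

theorem hcap_nonpos {φ : ℂ → ℂ} (hd : DifferentiableOn ℂ φ UHP)
    (hm : Set.MapsTo φ UHP UHP) {d : ℝ}
    (hl : Filter.Tendsto (fun z => z * (φ z - z)) atInfUHP (nhds (d : ℂ))) : d ≤ 0 := by
  have haxis := tendsto_mul_I_atInfUHP
  have l1 : Tendsto (fun y : ℝ => ((y : ℂ) * Complex.I) * (φ ((y : ℂ) * Complex.I) -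
      (y : ℂ) * Complex.I)) atTop (𝓝 (d : ℂ)) := hl.comp haxis
  have l0 : Tendsto (fun y : ℝ => φ ((y : ℂ) * Complex.I) - (y : ℂ) * Complex.I) atTop
      (𝓝 0) := by
    have h2 : Tendsto (fun y : ℝ => ((y : ℂ) * Complex.I)⁻¹) atTop (𝓝 0) :=
      tendsto_inv_atInfUHP.comp haxis
    have h3 := h2.mul l1
    rw [zero_mul] at h3
    apply h3.congr'
    filter_upwards [eventually_gt_atTop (0 : ℝ)] with y hy
    have hy0 : ((y : ℂ) * Complex.I) ≠ 0 := by
      simp [Complex.ofReal_ne_zero, hy.ne', Complex.I_ne_zero]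
    rw [← mul_assoc, inv_mul_cancel₀ hy0, one_mul]
  -- Step B : y ≤ Im φ(iy) for all y > 0
  have key : ∀ y : ℝ, 0 < y → y ≤ (φ ((y : ℂ) * Complex.I)).im := by
    intro y hy
    set w := φ ((y : ℂ) * Complex.I) with hwdef
    -- eventual inequality from Schwarz
    have hineq : ∀ᶠ y' : ℝ in atTop, y * y' *
        Complex.normSq (w - (starRingEnd ℂ) (φ ((y' : ℂ) * Complex.I)))
        ≤ (y + y') ^ 2 * w.im * (φ ((y' : ℂ) * Complex.I)).im := by
      filter_upwards [eventually_gt_atTop y] with y' hy'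
      exact schwarz_halfplane hd hm hy hy'
    set ψ : ℝ → ℂ := fun y' => φ ((y' : ℂ) * Complex.I) - (y' : ℂ) * Complex.I with hψdef
    have hψ0 : Tendsto ψ atTop (𝓝 0) := l0
    have hinv : Tendsto (fun y' : ℝ => (y' : ℝ)⁻¹) atTop (𝓝 0) := tendsto_inv_atTop_zero
    have hinvC : Tendsto (fun y' : ℝ => ((y' : ℂ))⁻¹) atTop (𝓝 0) := by
      have := (Complex.continuous_ofReal.tendsto 0).comp hinv
      simp only [Function.comp_def, Complex.ofReal_inv] at this
      simpa using this
    -- LHS limit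
    have hL : Tendsto (fun y' : ℝ => y * y' *
        Complex.normSq (w - (starRingEnd ℂ) (φ ((y' : ℂ) * Complex.I))) / y' ^ 3) atTop
        (𝓝 (y * 1)) := by
      have hinner : Tendsto (fun y' : ℝ =>
          (w - (starRingEnd ℂ) (φ ((y' : ℂ) * Complex.I))) * ((y' : ℂ))⁻¹) atTop
          (𝓝 Complex.I) := by
        have hconjψ : Tendsto (fun y' : ℝ => (starRingEnd ℂ) (ψ y')) atTop (𝓝 0) := by
          have := (Complex.continuous_conj.tendsto 0).comp hψ0
          simpa [Function.comp_def] using this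
        have hexpand : ∀ y' : ℝ, y' ≠ 0 → (w - (starRingEnd ℂ) (φ ((y' : ℂ) * Complex.I)))
            * ((y' : ℂ))⁻¹ = w * ((y' : ℂ))⁻¹ + Complex.I
            - (starRingEnd ℂ) (ψ y') * ((y' : ℂ))⁻¹ := by
          intro y' hy'
          have : (starRingEnd ℂ) (φ ((y' : ℂ) * Complex.I)) =
              (starRingEnd ℂ) (ψ y') + (starRingEnd ℂ) ((y' : ℂ) * Complex.I) := by
            rw [hψdef]; simp only [map_sub]; ring
          rw [this]
          have hconj : (starRingEnd ℂ) ((y' : ℂ) * Complex.I) = -((y' : ℂ) * Complex.I) := by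
            simp [Complex.conj_I]
          rw [hconj]
          have hy'C : ((y' : ℂ)) ≠ 0 := Complex.ofReal_ne_zero.mpr hy'
          field_simp
          ring
        have hlim : Tendsto (fun y' : ℝ => w * ((y' : ℂ))⁻¹ + Complex.I
            - (starRingEnd ℂ) (ψ y') * ((y' : ℂ))⁻¹) atTop (𝓝 (w * 0 + Complex.I - 0 * 0)) := by
          exact ((tendsto_const_nhds.mul hinvC).add tendsto_const_nhds).sub (hconjψ.mul hinvC)
        rw [show w * 0 + Complex.I - 0 * 0 = Complex.I by ring] at hlim
        apply hlim.congr'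
        filter_upwards [eventually_gt_atTop (0 : ℝ)] with y' hy'
        exact (hexpand y' hy'.ne').symm
      have hnsq : Tendsto (fun y' : ℝ =>
          Complex.normSq ((w - (starRingEnd ℂ) (φ ((y' : ℂ) * Complex.I))) * ((y' : ℂ))⁻¹))
          atTop (𝓝 (Complex.normSq Complex.I)) :=
        (Complex.continuous_normSq.tendsto _).comp hinner
      rw [show Complex.normSq Complex.I = 1 by simp] at hnsq
      have := (tendsto_const_nhds (x := y)).mul hnsq
      apply this.congr'
      filter_upwards [eventually_gt_atTop (0 : ℝ)] with y' hy'
      have hy'C : ((y' : ℂ)) ≠ 0 := Complex.ofReal_ne_zero.mpr hy'.ne'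
      rw [map_mul, Complex.normSq_inv, Complex.normSq_ofReal]
      field_simp
    -- RHS limit
    have hR : Tendsto (fun y' : ℝ => (y + y') ^ 2 * w.im * (φ ((y' : ℂ) * Complex.I)).im / y' ^ 3)
        atTop (𝓝 ((0 + 1) ^ 2 * w.im * (1 + 0))) := by
      have him : ∀ y' : ℝ, (φ ((y' : ℂ) * Complex.I)).im = y' + (ψ y').im := by
        intro y'
        rw [hψdef]
        simp [Complex.sub_im]
      have hψim : Tendsto (fun y' : ℝ => (ψ y').im) atTop (𝓝 0) := by
        have := (Complex.continuous_im.tendsto 0).comp hψ0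
        simpa [Function.comp_def] using this
      have h1 : Tendsto (fun y' : ℝ => (y * y'⁻¹ + 1) ^ 2 * w.im * (1 + (ψ y').im * y'⁻¹))
          atTop (𝓝 ((y * 0 + 1) ^ 2 * w.im * (1 + 0 * 0))) := by
        exact (((((tendsto_const_nhds.mul hinv).add tendsto_const_nhds).pow 2).mul
          tendsto_const_nhds).mul (tendsto_const_nhds.add (hψim.mul hinv)))
      rw [show (y * 0 + 1 : ℝ) = 0 + 1 by ring, show ((0:ℝ) * 0) = 0 by ring] at h1
      apply h1.congr'
      filter_upwards [eventually_gt_atTop (0 : ℝ)] with y' hy'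
      rw [him y', eq_div_iff (by positivity : (y' : ℝ) ^ 3 ≠ 0)]
      field_simp [hy'.ne']
    rw [mul_one] at hL
    rw [show ((0:ℝ) + 1) ^ 2 * w.im * (1 + 0) = w.im by ring] at hR
    -- compare
    have hle : ∀ᶠ y' : ℝ in atTop, y * y' *
        Complex.normSq (w - (starRingEnd ℂ) (φ ((y' : ℂ) * Complex.I))) / y' ^ 3
        ≤ (y + y') ^ 2 * w.im * (φ ((y' : ℂ) * Complex.I)).im / y' ^ 3 := by
      filter_upwards [hineq, eventually_gt_atTop (0 : ℝ)] with y' h1 h2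
      exact (div_le_div_iff_of_pos_right (by positivity)).mpr h1
    exact le_of_tendsto_of_tendsto hL hR hle
  -- Step C
  have hre : ∀ᶠ y : ℝ in atTop, (((y : ℂ) * Complex.I) * (φ ((y : ℂ) * Complex.I) -
      (y : ℂ) * Complex.I)).re ≤ 0 := by
    filter_upwards [eventually_gt_atTop (0 : ℝ)] with y hy
    have h1 : (((y : ℂ) * Complex.I) * (φ ((y : ℂ) * Complex.I) - (y : ℂ) * Complex.I)).re
        = -y * ((φ ((y : ℂ) * Complex.I)).im - y) := by
      simp only [Complex.mul_re, Complex.mul_im, Complex.sub_re, Complex.sub_im,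
        Complex.I_re, Complex.I_im, Complex.ofReal_re, Complex.ofReal_im]
      ring
    rw [h1]
    have h2 := key y hy
    nlinarith
  have hld : Tendsto (fun y : ℝ => (((y : ℂ) * Complex.I) * (φ ((y : ℂ) * Complex.I) -
      (y : ℂ) * Complex.I)).re) atTop (𝓝 ((d : ℂ).re)) :=
    (Complex.continuous_re.tendsto _).comp l1
  rw [Complex.ofReal_re] at hld
  exact le_of_tendsto hld hre

theorem simplyConnected_of_homeomorph {X Y : Type} [TopologicalSpace X] [TopologicalSpace Y]
    (h : X ≃ₜ Y) [SimplyConnectedSpace X] : SimplyConnectedSpace Y := by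
  obtain ⟨e⟩ := SimplyConnectedSpace.equiv_unit (X := X)
  have e2 : FundamentalGroupoid Y ≌ FundamentalGroupoid X :=
    FundamentalGroupoidFunctor.equivOfHomotopyEquiv
      (X := TopCat.of Y) (Y := TopCat.of X) h.symm.toHomotopyEquiv
  exact ⟨⟨e2.trans e⟩⟩

lemma eventually_mem_diff {K : Set ℂ} (hb : Bornology.IsBounded K) :
    ∀ᶠ z in atInfUHP, z ∈ UHP \ K := by
  obtain ⟨R₀, hR₀⟩ := hb.subset_ball 0
  rw [eventually_atInfUHP]
  refine ⟨R₀, fun z hz hle => ⟨hz, fun hzK => ?_⟩⟩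
  have h1 := hR₀ hzK
  rw [mem_ball, dist_zero_right, Complex.norm_eq_abs] at h1
  linarith

lemma abs_sub_le_eventually {F : ℂ → ℂ} (hsub : Tendsto (fun z => F z - z) atInfUHP (𝓝 0))
    {ε : ℝ} (hε : 0 < ε) : ∀ᶠ z in atInfUHP, Complex.abs (F z - z) ≤ ε := by
  have h1 : ∀ᶠ u in 𝓝 (0 : ℂ), Complex.abs u ≤ ε := by
    filter_upwards [Metric.closedBall_mem_nhds (0 : ℂ) hε] with u hu
    simpa [Complex.dist_eq, Complex.norm_eq_abs] using hu
  exact hsub.eventually h1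

lemma tendsto_self_atInfUHP_of_sub {F : ℂ → ℂ}
    (hsub : Tendsto (fun z => F z - z) atInfUHP (𝓝 0))
    (hmem : ∀ᶠ z in atInfUHP, F z ∈ UHP) : Tendsto F atInfUHP atInfUHP := by
  apply tendsto_atInfUHP_of _ hmem
  rw [Filter.tendsto_atTop]
  intro bb
  filter_upwards [abs_sub_le_eventually hsub one_pos,
    tendsto_abs_atInfUHP.eventually_ge_atTop (bb + 1)] with z h1 h2
  have h3 : Complex.abs z - Complex.abs (F z) ≤ Complex.abs (z - F z) := by
    simpa [Complex.norm_eq_abs] using norm_sub_norm_le z (F z)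
  rw [AbsoluteValue.map_sub] at h3
  linarith

lemma tendsto_ratio {F : ℂ → ℂ} (hF : Tendsto F atInfUHP atInfUHP)
    (hsub : Tendsto (fun w => F w - w) atInfUHP (𝓝 0)) :
    Tendsto (fun w => w * (F w)⁻¹) atInfUHP (𝓝 1) := by
  have hFinv : Tendsto (fun w => (F w)⁻¹) atInfUHP (𝓝 0) := tendsto_inv_atInfUHP.comp hF
  have h1 : Tendsto (fun w => 1 - (F w - w) * (F w)⁻¹) atInfUHP (𝓝 (1 - 0 * 0)) :=
    tendsto_const_nhds.sub (hsub.mul hFinv)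
  rw [show (1 : ℂ) - 0 * 0 = 1 by ring] at h1
  apply h1.congr'
  filter_upwards [(tendsto_abs_atInfUHP.comp hF).eventually_ge_atTop 1] with w hw
  have hF0 : F w ≠ 0 := by
    intro h
    rw [Function.comp_apply, h] at hw
    simp at hw
    linarith
  field_simp
  ring

lemma hcap_compose_limit {g : ℂ → ℂ} {c : ℝ}
    (hσ : Tendsto (fun z => z * (g z - z)) atInfUHP (𝓝 (c : ℂ)))
    {F : ℂ → ℂ} (hF : Tendsto F atInfUHP atInfUHP)
    (hsub : Tendsto (fun w => F w - w) atInfUHP (𝓝 0)) :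
    Tendsto (fun w => w * (g (F w) - F w)) atInfUHP (𝓝 (c : ℂ)) := by
  have h1 : Tendsto (fun w => F w * (g (F w) - F w)) atInfUHP (𝓝 (c : ℂ)) := hσ.comp hF
  have h2 := (tendsto_ratio hF hsub).mul h1
  rw [one_mul] at h2
  apply h2.congr'
  filter_upwards [(tendsto_abs_atInfUHP.comp hF).eventually_ge_atTop 1] with w hw
  have hF0 : F w ≠ 0 := by
    intro h
    rw [Function.comp_apply, h] at hw
    simp at hw
    linarith
  field_simp

lemma isOpen_diff_of_closure {K : Set ℂ} (hcl : K = closure K ∩ UHP) :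
    IsOpen (UHP \ K) := by
  have h1 : UHP \ K = UHP ∩ (closure K)ᶜ := by
    ext z
    constructor
    · rintro ⟨h1, h2⟩
      exact ⟨h1, fun hc => h2 (by rw [hcl]; exact ⟨hc, h1⟩)⟩
    · rintro ⟨h1, h2⟩
      exact ⟨h1, fun hk => h2 (subset_closure hk)⟩
  rw [h1]
  exact isOpen_UHP.inter isClosed_closure.isOpen_compl

theorem hydro_package {K : Set ℂ} {g : ℂ → ℂ} (hb : Bornology.IsBounded K)
    (hcl : K = closure K ∩ UHP) (hg : IsHydroMap K g) :
    ∃ G : ℂ → ℂ,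
      (∀ w ∈ UHP, G w ∈ UHP \ K ∧ g (G w) = w) ∧
      (∀ z ∈ UHP \ K, G (g z) = z) ∧
      DifferentiableOn ℂ G UHP ∧
      (∀ O ⊆ UHP \ K, IsOpen O → IsOpen (g '' O)) ∧
      Filter.Tendsto G atInfUHP atInfUHP ∧
      Filter.Tendsto (fun w => G w - w) atInfUHP (𝓝 0) := by
  obtain ⟨hdiff, hinj, himg, htend⟩ := hg
  have hUopen : IsOpen (UHP \ K) := isOpen_diff_of_closure hcl
  obtain ⟨G, hG1, hG2, hGdiff, hGopen⟩ := exists_global_inverse hUopen hdiff hinj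
  rw [himg] at hG1 hGdiff
  have hCL : ∀ ε : ℝ, 0 < ε → ∃ R : ℝ, 0 < R ∧ ∀ w ∈ UHP, R ≤ Complex.abs w →
      Complex.abs (G w - w) ≤ ε := fun ε hε =>
    hydro_inv_bound hb hinj himg htend hG1 hGdiff.continuousOn hε
  have hGsub : Tendsto (fun w => G w - w) atInfUHP (𝓝 0) := by
    rw [Metric.tendsto_nhds]
    intro ε hε
    obtain ⟨R, hR0, hR⟩ := hCL (ε / 2) (by linarith)
    rw [eventually_atInfUHP]
    refine ⟨R, fun w hw hle => ?_⟩
    have := hR w hw hle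
    rw [Complex.dist_eq, sub_zero, Complex.norm_eq_abs]
    linarith
  have hGmem : ∀ᶠ w in atInfUHP, G w ∈ UHP := by
    filter_upwards [eventually_mem_UHP] with w hw
    exact (hG1 w hw).1.1
  exact ⟨G, hG1, hG2, hGdiff, hGopen,
    tendsto_self_atInfUHP_of_sub hGsub hGmem, hGsub⟩

theorem hasHcap_sub_nonpos {K : Set ℂ} {g₁ g₂ : ℂ → ℂ} {c₁ c₂ : ℝ}
    (hb : Bornology.IsBounded K) (hcl : K = closure K ∩ UHP)
    (h₁ : HasHcap K g₁ c₁) (h₂ : HasHcap K g₂ c₂) : c₁ - c₂ ≤ 0 := by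
  obtain ⟨⟨h₁d, h₁i, h₁im, h₁t⟩, h₁cap⟩ := h₁
  obtain ⟨G₂, hG1, hG2, hGdiff, hGopen, hGtend, hGsub⟩ := hydro_package hb hcl h₂.1
  have hφdiff : DifferentiableOn ℂ (fun w => g₁ (G₂ w)) UHP :=
    h₁d.comp hGdiff fun w hw => (hG1 w hw).1
  have hφmaps : Set.MapsTo (fun w => g₁ (G₂ w)) UHP UHP := fun w hw =>
    h₁im ▸ mem_image_of_mem g₁ (hG1 w hw).1
  have T1 : Tendsto (fun w => w * (g₁ (G₂ w) - G₂ w)) atInfUHP (𝓝 (c₁ : ℂ)) :=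
    hcap_compose_limit h₁cap hGtend hGsub
  have T2 : Tendsto (fun w => w * (g₂ (G₂ w) - G₂ w)) atInfUHP (𝓝 (c₂ : ℂ)) :=
    hcap_compose_limit h₂.2 hGtend hGsub
  have T2' : Tendsto (fun w => w * (w - G₂ w)) atInfUHP (𝓝 (c₂ : ℂ)) := by
    apply T2.congr'
    filter_upwards [eventually_mem_UHP] with w hw
    rw [(hG1 w hw).2]
  have Tφ : Tendsto (fun w => w * (g₁ (G₂ w) - w)) atInfUHP (𝓝 ((c₁ - c₂ : ℝ) : ℂ)) := by
    have h3 := T1.sub T2'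
    rw [show ((c₁ : ℂ) - (c₂ : ℂ)) = ((c₁ - c₂ : ℝ) : ℂ) by push_cast; ring] at h3
    apply h3.congr'
    filter_upwards with w
    ring
  exact hcap_nonpos hφdiff hφmaps Tφ

theorem hasHcap_unique {K : Set ℂ} {g₁ g₂ : ℂ → ℂ} {c₁ c₂ : ℝ}
    (hb : Bornology.IsBounded K) (hcl : K = closure K ∩ UHP)
    (h₁ : HasHcap K g₁ c₁) (h₂ : HasHcap K g₂ c₂) : c₁ = c₂ := by
  have ha := hasHcap_sub_nonpos hb hcl h₁ h₂
  have hb' := hasHcap_sub_nonpos hb hcl h₂ h₁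
  linarith

end Auxiliary

section Main

open Set Metric Complex

/-- Additivity of the half-plane capacity: if `A` is a compact `ℍ`-hull and
`B ⊆ ℍ \ A` is such that `A ∪ B` is a compact `ℍ`-hull, then `g_A(B)` is a compact
`ℍ`-hull and `hcap(A ∪ B) = hcap(A) + hcap(g_A(B))`. -/
theorem hcap_additive (A B : Set ℂ) (hA : IsCompactHHull A) (hB : B ⊆ UHP \ A)
    (hAB : IsCompactHHull (A ∪ B)) (gA : ℂ → ℂ) (a : ℝ) (hgA : HasHcap A gA a)
    (gAB : ℂ → ℂ) (c : ℝ) (hgAB : HasHcap (A ∪ B) gAB c) :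
    IsCompactHHull (gA '' B) ∧
      ∀ (gB : ℂ → ℂ) (b : ℝ), HasHcap (gA '' B) gB b → c = a + b := by
  classical
  obtain ⟨hAb, hAsub, hAcl, hAsc⟩ := hA
  obtain ⟨hABb, hABsub, hABcl, hABsc⟩ := hAB
  obtain ⟨hgAd, hgAi, hgAim, hgAt⟩ := hgA.1
  have hUAopen : IsOpen (UHP \ A) := isOpen_diff_of_closure hAcl
  have hDopen : IsOpen (UHP \ (A ∪ B)) := isOpen_diff_of_closure hABcl
  have hDsubUA : UHP \ (A ∪ B) ⊆ UHP \ A := fun z hz => ⟨hz.1, fun h => hz.2 (Or.inl h)⟩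
  have hEsubUHP : gA '' B ⊆ UHP := by
    rintro w ⟨z, hzB, rfl⟩
    exact hgAim ▸ mem_image_of_mem gA (hB hzB)
  have himgD : gA '' (UHP \ (A ∪ B)) = UHP \ gA '' B := by
    apply Subset.antisymm
    · rintro w ⟨z, hzD, rfl⟩
      refine ⟨hgAim ▸ mem_image_of_mem gA (hDsubUA hzD), ?_⟩
      rintro ⟨z', hz'B, heq⟩
      have hzz : z' = z := hgAi (hB hz'B) (hDsubUA hzD) heq
      exact hzD.2 (Or.inr (hzz ▸ hz'B))
    · rintro w ⟨hwU, hwE⟩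
      obtain ⟨z, hzUA, rfl⟩ : w ∈ gA '' (UHP \ A) := hgAim.symm ▸ hwU
      refine ⟨z, ⟨hzUA.1, ?_⟩, rfl⟩
      rintro (h | h)
      · exact hzUA.2 h
      · exact hwE (mem_image_of_mem gA h)
  obtain ⟨GA, hGA1, hGA2, hGAdiff, hGAopen, hGAtend, hGAsub⟩ := hydro_package hAb hAcl hgA.1
  have hBbdd : Bornology.IsBounded B := hABb.subset subset_union_right
  have hEbdd : Bornology.IsBounded (gA '' B) := by
    obtain ⟨MB, hMB⟩ := hBbdd.subset_ball 0
    obtain ⟨R, hR0, hR⟩ : ∃ R : ℝ, 0 < R ∧ ∀ w ∈ UHP, R ≤ Complex.abs w →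
        Complex.abs (GA w - w) ≤ 1 := by
      have hev := abs_sub_le_eventually hGAsub one_pos
      rw [eventually_atInfUHP] at hev
      obtain ⟨R', hR'⟩ := hev
      exact ⟨max R' 1, lt_of_lt_of_le one_pos (le_max_right _ _),
        fun w hw hle => hR' w hw (le_trans (le_max_left _ _) hle)⟩
    set M : ℝ := max R (MB + 2) with hMdef
    have hsubset : gA '' B ⊆ ball (0 : ℂ) M := ?_
    · exact Metric.isBounded_ball.subset hsubset
    rintro w ⟨z, hzB, rfl⟩
    rw [mem_ball, dist_zero_right, Complex.norm_eq_abs]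
    by_contra hge
    push_neg at hge
    have hwU : gA z ∈ UHP := hgAim ▸ mem_image_of_mem gA (hB hzB)
    have h1 := hR (gA z) hwU (le_trans (le_max_left _ _) hge)
    have hGAz : GA (gA z) = z := hGA2 z (hB hzB)
    rw [hGAz] at h1
    have h2 : Complex.abs (gA z) - Complex.abs z ≤ Complex.abs (gA z - z) := by
      simpa [Complex.norm_eq_abs] using norm_sub_norm_le (gA z) z
    rw [AbsoluteValue.map_sub] at h1
    have h3 := hMB hzB
    rw [mem_ball, dist_zero_right, Complex.norm_eq_abs] at h3
    have h4 : MB + 2 ≤ M := le_max_right _ _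
    linarith
  have hUEopen : IsOpen (UHP \ gA '' B) := by
    rw [← himgD]
    exact hGAopen _ hDsubUA hDopen
  have hEcl : gA '' B = closure (gA '' B) ∩ UHP := by
    apply Subset.antisymm
    · exact subset_inter subset_closure hEsubUHP
    · rintro w ⟨hwcl, hwU⟩
      by_contra hwE
      obtain ⟨x, hx1, hx2⟩ := mem_closure_iff.mp hwcl (UHP \ gA '' B) hUEopen ⟨hwU, hwE⟩
      exact hx1.2 hx2
  -- simply connected via homeomorphism
  have hbij : Set.BijOn gA (UHP \ (A ∪ B)) (UHP \ gA '' B) :=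
    ⟨fun z hz => himgD ▸ mem_image_of_mem gA hz, hgAi.mono hDsubUA, by
      rw [← himgD]; exact surjOn_image gA _⟩
  have hscE : SimplyConnectedSpace (UHP \ gA '' B : Set ℂ) := by
    have hinst : SimplyConnectedSpace (UHP \ (A ∪ B) : Set ℂ) := hABsc
    set e := Set.BijOn.equiv gA hbij with hedef
    have hcont' : Continuous fun z : (UHP \ (A ∪ B) : Set ℂ) => gA (z : ℂ) :=
      ContinuousOn.restrict ((hgAd.continuousOn).mono hDsubUA)
    have hcont : Continuous e := by
      have : Continuous fun z : (UHP \ (A ∪ B) : Set ℂ) =>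
          (⟨gA (z : ℂ), hbij.mapsTo z.2⟩ : (UHP \ gA '' B : Set ℂ)) :=
        hcont'.subtype_mk _
      exact this
    have hopenmap : IsOpenMap e := by
      intro O' hO'
      obtain ⟨O, hO, hOeq⟩ := isOpen_induced_iff.mp hO'
      have himg2 : e '' O' = Subtype.val ⁻¹' (gA '' (O ∩ (UHP \ (A ∪ B)))) := by
        ext ⟨w, hw⟩
        constructor
        · rintro ⟨⟨z, hz⟩, hzO', heq⟩
          have hzO : z ∈ O := by rw [← hOeq] at hzO'; exact hzO'
          have hval : gA z = w := congrArg Subtype.val heq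
          exact ⟨z, ⟨hzO, hz⟩, hval⟩
        · rintro ⟨z, ⟨hzO, hzD⟩, hgz⟩
          refine ⟨⟨z, hzD⟩, ?_, ?_⟩
          · rw [← hOeq]; exact hzO
          · exact Subtype.ext hgz
      rw [himg2]
      exact (hGAopen _ (fun x hx => hDsubUA hx.2) (hO.inter hDopen)).preimage continuous_subtype_val
    exact simplyConnected_of_homeomorph (Equiv.toHomeomorphOfContinuousOpen e hcont hopenmap)
  refine ⟨⟨hEbdd, hEsubUHP, hEcl, hscE⟩, ?_⟩
  -- Part 2
  intro gB b hgB
  obtain ⟨⟨hgBd, hgBi, hgBim, hgBt⟩, hgBcap⟩ := hgB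
  have hgAmemev : ∀ᶠ z in atInfUHP, gA z ∈ UHP := by
    filter_upwards [eventually_mem_diff hAb] with z hz
    exact hgAim ▸ mem_image_of_mem gA hz
  have hgAtendinf : Tendsto gA atInfUHP atInfUHP := tendsto_self_atInfUHP_of_sub hgAt hgAmemev
  have hHh : HasHcap (A ∪ B) (fun z => gB (gA z)) (a + b) := by
    refine ⟨⟨?_, ?_, ?_, ?_⟩, ?_⟩
    · exact hgBd.comp (hgAd.mono hDsubUA) fun z hz => himgD ▸ mem_image_of_mem gA hz
    · exact hgBi.comp (hgAi.mono hDsubUA) fun z hz => himgD ▸ mem_image_of_mem gA hz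
    · rw [← Set.image_image, himgD, hgBim]
    · have h1 : Tendsto (fun z => (gB (gA z) - gA z) + (gA z - z)) atInfUHP (𝓝 (0 + 0)) :=
        (hgBt.comp hgAtendinf).add hgAt
      rw [add_zero] at h1
      apply h1.congr
      intro z
      ring
    · have T1 : Tendsto (fun z => z * (gB (gA z) - gA z)) atInfUHP (𝓝 (b : ℂ)) :=
        hcap_compose_limit hgBcap hgAtendinf hgAt
      have T2 := hgA.2
      have h1 := T1.add T2
      rw [show ((b : ℂ) + (a : ℂ)) = ((a + b : ℝ) : ℂ) by push_cast; ring] at h1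
      apply h1.congr
      intro z
      ring
  exact hasHcap_unique hABb hABcl hgAB hHh

end Main
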